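/- arXiv:1104.1987 — 6 statements merged into one kernel-verified Lean document; each statement's English description precedes it below -/
import Mathlib

section
/- Let p, θ₁,…,θₙ be polynomials in n variables, and suppose ∑ᵢ (∂p/∂xᵢ)(x) · θᵢ(x) ≥ 0 for all x ∈ ℝⁿ. If φ : [0,r] → ℝⁿ is differentiable with φ'(t) = θ(φ(t)) for all t and p(φ(0)) ≥ 0, then p(φ(t)) ≥ 0 for all t ∈ [0,r]. -/
/-! Along a solution of `φ' = θ(φ)` the chain rule makes the derivative of `t ↦ p(φ(t))` the
Lie derivative `∑ᵢ ∂ᵢp · θᵢ` evaluated at `φ(t)`, which is nonnegative by hypothesis. Hence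
`p ∘ φ` is monotone on `[0, r]` and stays above `p(φ(0)) ≥ 0`. -/

open MvPolynomial Set

theorem MvPolynomial.hasDerivWithinAt_eval_comp {𝕜 σ : Type*} [NontriviallyNormedField 𝕜]
    [Fintype σ] {φ : 𝕜 → σ → 𝕜} {v : σ → 𝕜} {s : Set 𝕜} {t : 𝕜}
    (hφ : ∀ i, HasDerivWithinAt (fun u => φ u i) (v i) s t) (p : MvPolynomial σ 𝕜) :
    HasDerivWithinAt (fun u => eval (φ u) p) (∑ i, eval (φ t) (pderiv i p) * v i) s t := by
  classical
  induction p using MvPolynomial.induction_on with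
  | C a => simpa using hasDerivWithinAt_const t s a
  | add p q hp hq =>
    simp only [map_add, add_mul, Finset.sum_add_distrib]
    exact hp.add hq
  | mul_X p i hp =>
    have hsum : ∑ j, eval (φ t) (pderiv j (p * X i)) * v j
        = (∑ j, eval (φ t) (pderiv j p) * v j) * φ t i + eval (φ t) p * v i := by
      simp only [pderiv_mul, map_add, map_mul, eval_X, add_mul, Finset.sum_add_distrib,
        Finset.sum_mul]
      congr 1
      · exact Finset.sum_congr rfl fun j _ => mul_right_comm _ _ _
      · simp [pderiv_X, Pi.single_apply]
    simp only [hsum, eval_mul, eval_X]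
    exact hp.mul (hφ i)

theorem stmt_5 (n : ℕ) (p : MvPolynomial (Fin n) ℝ) (θ : Fin n → MvPolynomial (Fin n) ℝ)
    (hLie : ∀ x : Fin n → ℝ, 0 ≤ ∑ i, eval x (pderiv i p) * eval x (θ i))
    (r : ℝ) (φ : ℝ → Fin n → ℝ)
    (hφ : ∀ i, ∀ t ∈ Icc (0:ℝ) r,
      HasDerivWithinAt (fun s => φ s i) (eval (φ t) (θ i)) (Icc (0:ℝ) r) t)
    (h0 : 0 ≤ eval (φ 0) p) :
    ∀ t ∈ Icc (0:ℝ) r, 0 ≤ eval (φ t) p := by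
  intro t ht
  have hderiv (s : ℝ) (hs : s ∈ Icc 0 r) := hasDerivWithinAt_eval_comp (fun i => hφ i s hs) p
  have hmono : MonotoneOn (fun s => eval (φ s) p) (Icc 0 r) :=
    monotoneOn_of_hasDerivWithinAt_nonneg (convex_Icc 0 r)
      (fun s hs => (hderiv s hs).continuousWithinAt)
      (fun s hs => (hderiv s (interior_subset hs)).mono interior_subset)
      (fun s _ => hLie (φ s))
  exact h0.trans (hmono (left_mem_Icc.2 (ht.1.trans ht.2)) ht ht.1)
end

section
/- Let p, θ₁,…,θₙ be polynomials in n variables, and suppose ∑ᵢ (∂p/∂xᵢ)(x) · θᵢ(x) > 0 for all x ∈ ℝⁿ. If φ : [0,r] → ℝⁿ is differentiable with φ'(t) = θ(φ(t)) for all t and p(φ(0)) > 0, then p(φ(t)) > 0 for all t ∈ [0,r]. -/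
open MvPolynomial Set

/-! Along a solution of `φ' = θ(φ)` the chain rule gives `(p ∘ φ)' = ∑ᵢ ∂ᵢp(φ) · θᵢ(φ)`, the Lie
derivative of `p` along `θ`, which is positive everywhere; so `p ∘ φ` is monotone on `[0, r]`
and stays above its positive initial value. -/

namespace MvPolynomial

variable {𝕜 σ : Type*} [NontriviallyNormedField 𝕜] [Fintype σ] [DecidableEq σ]

theorem hasDerivWithinAt_eval_comp_s6 (q : MvPolynomial σ 𝕜) {γ : 𝕜 → σ → 𝕜} {γ' : σ → 𝕜}
    {s : Set 𝕜} {t : 𝕜} (hγ : ∀ i, HasDerivWithinAt (fun u => γ u i) (γ' i) s t) :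
    HasDerivWithinAt (fun u => eval (γ u) q) (∑ i, eval (γ t) (pderiv i q) * γ' i) s t := by
  induction q using MvPolynomial.induction_on with
  | C a =>
    simpa only [eval_C, pderiv_C, map_zero, zero_mul, Finset.sum_const_zero]
      using hasDerivWithinAt_const t s a
  | add f g hf hg =>
    simpa only [map_add, add_mul, Finset.sum_add_distrib, Pi.add_def] using hf.add hg
  | mul_X f j hf =>
    have hsum : ∑ i, eval (γ t) (pderiv i (f * X j)) * γ' i
        = (∑ i, eval (γ t) (pderiv i f) * γ' i) * γ t j + eval (γ t) f * γ' j := by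
      simp only [pderiv_mul, pderiv_X, map_add, map_mul, eval_X, add_mul,
        Finset.sum_add_distrib, Finset.sum_mul]
      congr 1
      · exact Finset.sum_congr rfl fun i _ => by ring
      · rw [Finset.sum_eq_single j (fun i _ hij => by simp [Pi.single_eq_of_ne' hij])
          (by simp)]
        simp
    rw [hsum]
    simpa only [map_mul, eval_X, Pi.mul_def] using hf.mul (hγ j)

end MvPolynomial

theorem stmt_6 (n : ℕ) (p : MvPolynomial (Fin n) ℝ) (θ : Fin n → MvPolynomial (Fin n) ℝ)
    (hLie : ∀ x : Fin n → ℝ, 0 < ∑ i, eval x (pderiv i p) * eval x (θ i))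
    (r : ℝ) (φ : ℝ → Fin n → ℝ)
    (hφ : ∀ i, ∀ t ∈ Icc (0:ℝ) r,
      HasDerivWithinAt (fun s => φ s i) (eval (φ t) (θ i)) (Icc (0:ℝ) r) t)
    (h0 : 0 < eval (φ 0) p) :
    ∀ t ∈ Icc (0:ℝ) r, 0 < eval (φ t) p := by
  have hderiv : ∀ s ∈ Icc (0:ℝ) r, HasDerivWithinAt (fun u => eval (φ u) p)
      (∑ i, eval (φ s) (pderiv i p) * eval (φ s) (θ i)) (Icc 0 r) s :=
    fun s hs => hasDerivWithinAt_eval_comp_s6 p fun i => hφ i s hs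
  have hmono : MonotoneOn (fun u => eval (φ u) p) (Icc 0 r) :=
    monotoneOn_of_hasDerivWithinAt_nonneg (convex_Icc 0 r)
      (fun s hs => (hderiv s hs).continuousWithinAt)
      (fun s hs => (hderiv s (interior_subset hs)).mono interior_subset)
      (fun s _ => (hLie (φ s)).le)
  intro t ht
  exact h0.trans_le (hmono (left_mem_Icc.2 (ht.1.trans ht.2)) ht ht.1)
end

section
/- There exist a point (x₀,y₀) ∈ ℝ² with −(x₀−y₀)² ≥ 0 and a differentiable function φ : [0,r] → ℝ² with φ(0) = (x₀,y₀), φ₁'(t) = 1, φ₂'(t) = φ₂(t) for all t, and −(φ₁(t)−φ₂(t))² < 0 for some t ∈ [0,r]. Hence the set {(x,y) : −(x−y)² ≥ 0} is not invariant under the flow of x' = 1, y' = y. -/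
open Set

theorem stmt_9 : ∃ (x₀ y₀ r : ℝ) (x y : ℝ → ℝ),
    0 < r ∧
    -(x₀ - y₀) ^ 2 ≥ 0 ∧ x 0 = x₀ ∧ y 0 = y₀ ∧
    (∀ t ∈ Icc (0:ℝ) r, HasDerivWithinAt x 1 (Icc (0:ℝ) r) t) ∧
    (∀ t ∈ Icc (0:ℝ) r, HasDerivWithinAt y (y t) (Icc (0:ℝ) r) t) ∧
    ∃ t ∈ Icc (0:ℝ) r, -(x t - y t) ^ 2 < 0 := by
  refine ⟨0, 0, 1, id, fun _ => 0, one_pos, by norm_num, rfl, rfl,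
    fun t _ => (hasDerivAt_id t).hasDerivWithinAt,
    fun t _ => (hasDerivAt_const t 0).hasDerivWithinAt,
    1, by norm_num, by norm_num⟩
end

section
/- For real polynomials p₁, p₂, q₁, q₂ in variables x₁,…,xₙ and polynomials θ₁,…,θₙ: if ∑ᵢ (∂p₁/∂xᵢ − ∂p₂/∂xᵢ)·θᵢ = 0 and ∑ᵢ (∂q₁/∂xᵢ − ∂q₂/∂xᵢ)·θᵢ = 0 identically, then the Lie derivative of (p₁−p₂)·(q₁−q₂) along θ, namely ∑ᵢ ∂((p₁−p₂)(q₁−q₂))/∂xᵢ · θᵢ, is identically zero; moreover p₁ = p₂ ∨ q₁ = q₂ is pointwise equivalent to (p₁−p₂)(q₁−q₂) = 0. -/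
open MvPolynomial

theorem stmt_10 (n : ℕ) (p₁ p₂ q₁ q₂ : MvPolynomial (Fin n) ℝ)
    (θ : Fin n → MvPolynomial (Fin n) ℝ)
    (hp : ∑ i, (pderiv i p₁ - pderiv i p₂) * θ i = 0)
    (hq : ∑ i, (pderiv i q₁ - pderiv i q₂) * θ i = 0) :
    (∑ i, pderiv i ((p₁ - p₂) * (q₁ - q₂)) * θ i = 0) ∧
    (∀ x : Fin n → ℝ,
      (eval x p₁ = eval x p₂ ∨ eval x q₁ = eval x q₂) ↔
        eval x ((p₁ - p₂) * (q₁ - q₂)) = 0) := by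
  constructor
  · have : ∑ i, pderiv i ((p₁ - p₂) * (q₁ - q₂)) * θ i
        = (q₁ - q₂) * ∑ i, (pderiv i p₁ - pderiv i p₂) * θ i
          + (p₁ - p₂) * ∑ i, (pderiv i q₁ - pderiv i q₂) * θ i := by
      rw [Finset.mul_sum, Finset.mul_sum, ← Finset.sum_add_distrib]
      refine Finset.sum_congr rfl fun i _ => ?_
      simp [pderiv_mul]
      ring
    rw [this, hp, hq]
    ring
  · intro x
    simp [sub_eq_zero, mul_eq_zero]
end

section
/- Let p be a univariate real polynomial such that −x·p'(x) = 0 for all x ∈ ℝ. Then p is a constant polynomial. Consequently, there is no univariate polynomial p such that both (i) p(x) = 0 ⟺ x = 0 for all x ∈ ℝ and (ii) −x·p'(x) = 0 for all x ∈ ℝ. -/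
theorem stmt_12 :
    (∀ p : Polynomial ℝ, (∀ x : ℝ, -x * (Polynomial.derivative p).eval x = 0) →
      ∃ c : ℝ, p = Polynomial.C c) ∧
    ¬ ∃ p : Polynomial ℝ,
      (∀ x : ℝ, p.eval x = 0 ↔ x = 0) ∧
      (∀ x : ℝ, -x * (Polynomial.derivative p).eval x = 0) := by
  have main : ∀ p : Polynomial ℝ, (∀ x : ℝ, -x * (Polynomial.derivative p).eval x = 0) →
      ∃ c : ℝ, p = Polynomial.C c := by
    intro p h
    have hXq : (Polynomial.X * Polynomial.derivative p : Polynomial ℝ) = 0 := by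
      apply Polynomial.funext
      intro x
      have := h x
      simp only [Polynomial.eval_mul, Polynomial.eval_X, Polynomial.eval_zero]
      nlinarith [h x]
    have hq : Polynomial.derivative p = 0 := by
      rcases mul_eq_zero.mp hXq with h1 | h2
      · exact absurd h1 Polynomial.X_ne_zero
      · exact h2
    have : p.natDegree = 0 := Polynomial.natDegree_eq_zero_of_derivative_eq_zero hq
    exact ⟨p.coeff 0, Polynomial.eq_C_of_natDegree_eq_zero this⟩
  refine ⟨main, ?_⟩
  rintro ⟨p, h1, h2⟩
  obtain ⟨c, rfl⟩ := main p h2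
  have h0 : c = 0 := by simpa using (h1 0).mpr rfl
  have := (h1 1).mp (by simp [h0])
  norm_num at this
end

section
/- There is no bivariate real polynomial p(x,y), depending nontrivially on x, such that (i) p(x,y) ≥ 0 for all x ≥ 0, y ≥ 0; (ii) for all (x,y), p(x,y) ≥ 0 implies x ≥ 0 and y ≥ 0; and (iii) (∂p/∂x)(x,y)·y + (∂p/∂y)(x,y) ≥ 0 for all (x,y) ∈ ℝ². -/
open MvPolynomial

private lemma eval_at_y0 (x : ℝ) (p : MvPolynomial (Fin 2) ℝ) :
    Polynomial.eval x (aeval (fun i : Fin 2 => if i = 0 then Polynomial.X else 0) p)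
      = eval ![x, 0] p := by
  induction p using MvPolynomial.induction_on with
  | C a => simp
  | add p q hp hq => simp [hp, hq]
  | mul_X p i hp => fin_cases i <;> simp [hp]

theorem stmt_18 :
    ¬ ∃ p : MvPolynomial (Fin 2) ℝ,
      pderiv (0 : Fin 2) p ≠ 0 ∧
      (∀ x y : ℝ, 0 ≤ x → 0 ≤ y → 0 ≤ eval ![x, y] p) ∧
      (∀ x y : ℝ, 0 ≤ eval ![x, y] p → 0 ≤ x ∧ 0 ≤ y) ∧
      (∀ x y : ℝ, 0 ≤ eval ![x, y] (pderiv (0 : Fin 2) p) * y +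
        eval ![x, y] (pderiv (1 : Fin 2) p)) := by
  rintro ⟨p, -, h1, h2, -⟩
  -- continuity of y ↦ eval ![x,y] p
  have hcont : ∀ x : ℝ, Continuous fun y : ℝ => eval ![x, y] p := by
    intro x
    have hc : Continuous fun y : ℝ => (![x, y] : Fin 2 → ℝ) := by
      refine continuous_pi ?_
      intro i
      fin_cases i
      · exact continuous_const
      · exact continuous_id
    exact (MvPolynomial.continuous_eval (p := p)).comp hc
  -- for every x, p(x,0) ≤ 0, by continuity from y < 0 where p < 0
  have hle : ∀ x : ℝ, eval ![x, 0] p ≤ 0 := by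
    intro x
    have htend : Filter.Tendsto (fun y : ℝ => eval ![x, y] p) (nhdsWithin 0 (Set.Iio 0))
        (nhds (eval ![x, 0] p)) :=
      ((hcont x).tendsto 0).mono_left nhdsWithin_le_nhds
    refine le_of_tendsto htend ?_
    filter_upwards [self_mem_nhdsWithin] with y (hy : y < 0)
    by_contra hc
    push_neg at hc
    exact absurd ((h2 x y hc.le).2) (not_le.mpr hy)
  -- the univariate polynomial p(·,0)
  set q : Polynomial ℝ := aeval (fun i : Fin 2 => if i = 0 then Polynomial.X else 0) p with hq
  have hq0 : ∀ x : ℝ, 0 ≤ x → q.eval x = 0 := by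
    intro x hx
    rw [eval_at_y0]
    exact le_antisymm (hle x) (h1 x 0 hx le_rfl)
  have hqzero : q = 0 := by
    refine Polynomial.eq_zero_of_infinite_isRoot q ?_
    exact (Set.Ici_infinite (0:ℝ)).mono (fun x hx => hq0 x hx)
  have : eval ![(-1 : ℝ), 0] p = 0 := by
    rw [← eval_at_y0, ← hq, hqzero, Polynomial.eval_zero]
  have := (h2 (-1) 0 this.ge).1
  linarith
end
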